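/- Let W2, W1, X, Y, Z be discrete random variables forming the Markov chain W2 ↔ W1 ↔ X ↔ Y ↔ Z. Then I(W1;Y|W2) − I(W1;Z|W2) ≤ I(W1;Y|Z,W2) ≤ I(X;Y|Z). -/

import Mathlib

open Finset

structure FinProb (Ω : Type) [Fintype Ω] where
  p : Ω → ℝ
  nonneg : ∀ ω, 0 ≤ p ω
  sum_one : ∑ ω, p ω = 1

namespace FinProb

variable {Ω : Type} [Fintype Ω] (μ : FinProb Ω)

/-- P(X = x) -/
noncomputable def prob {α : Type} [DecidableEq α] (X : Ω → α) (x : α) : ℝ :=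
  ∑ ω, if X ω = x then μ.p ω else 0

/-- Shannon entropy (base 2) of a random variable. -/
noncomputable def H {α : Type} [Fintype α] [DecidableEq α] (X : Ω → α) : ℝ :=
  -∑ x, μ.prob X x * Real.logb 2 (μ.prob X x)

/-- Mutual information I(X;Y). -/
noncomputable def I {α β : Type} [Fintype α] [DecidableEq α] [Fintype β] [DecidableEq β]
    (X : Ω → α) (Y : Ω → β) : ℝ :=
  μ.H X + μ.H Y - μ.H (fun ω => (X ω, Y ω))

/-- Conditional entropy H(X|Z). -/
noncomputable def condH {α γ : Type} [Fintype α] [DecidableEq α] [Fintype γ] [DecidableEq γ]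
    (X : Ω → α) (Z : Ω → γ) : ℝ :=
  μ.H (fun ω => (X ω, Z ω)) - μ.H Z

/-- Conditional mutual information I(X;Y|Z). -/
noncomputable def condI {α β γ : Type} [Fintype α] [DecidableEq α] [Fintype β] [DecidableEq β]
    [Fintype γ] [DecidableEq γ] (X : Ω → α) (Y : Ω → β) (Z : Ω → γ) : ℝ :=
  μ.condH X Z + μ.condH Y Z - μ.condH (fun ω => (X ω, Y ω)) Z

/-- X and Y are conditionally independent given Z. -/
def CondIndep {α β γ : Type} [DecidableEq α] [DecidableEq β] [DecidableEq γ]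
    (X : Ω → α) (Y : Ω → β) (Z : Ω → γ) : Prop :=
  ∀ x y z, μ.prob (fun ω => (X ω, Y ω, Z ω)) (x, y, z) * μ.prob Z z
    = μ.prob (fun ω => (X ω, Z ω)) (x, z) * μ.prob (fun ω => (Y ω, Z ω)) (y, z)

/-- X and Y are independent. -/
def Indep {α β : Type} [DecidableEq α] [DecidableEq β] (X : Ω → α) (Y : Ω → β) : Prop :=
  ∀ x y, μ.prob (fun ω => (X ω, Y ω)) (x, y) = μ.prob X x * μ.prob Y y

end FinProb

/-- Binary entropy function (base 2). -/
noncomputable def binEnt (x : ℝ) : ℝ := -x * Real.logb 2 x - (1 - x) * Real.logb 2 (1 - x)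

/-!
The first inequality needs no Markov property: expanding `I(W₁; Y, Z | W₂)` by the chain rule in
the two possible orders shows that the left-hand side equals
`I(W₁; Y | Z, W₂) - I(W₁; Z | Y, W₂)`, and conditional mutual information is nonnegative
(Gibbs' inequality).

For the second, the chain rule gives `I(W₁; Y | Z, W₂) ≤ I(W₂ W₁; Y | Z)`, and the latter is at most
`I(X; Y | Z)` by the conditional data-processing inequality for `(W₂, W₁) ↔ X ↔ (Y, Z)`: expanding
`I(Y; X, W₂ W₁ | Z)` in both orders, the extra term `I(W₂ W₁; Y | Z, X)` vanishes because it is part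
of `I(W₂ W₁; Y, Z | X) = 0`.
-/

theorem Real.sum_mul_log_div_nonneg {ι : Type} [Fintype ι] {p q : ι → ℝ}
    (hp : ∀ i, 0 ≤ p i) (hq : ∀ i, 0 ≤ q i) (hpq : ∀ i, q i = 0 → p i = 0)
    (hsum : ∑ i, q i ≤ ∑ i, p i) :
    0 ≤ ∑ i, p i * Real.log (p i / q i) := by
  have pointwise : ∀ i, p i - q i ≤ p i * Real.log (p i / q i) := by
    intro i
    rcases (hp i).eq_or_lt with h0 | h0
    · simp [← h0, hq i]
    have hqi : 0 < q i := (hq i).lt_of_ne fun h => h0.ne' (hpq i h.symm)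
    have := Real.one_sub_inv_le_log_of_pos (div_pos h0 hqi)
    rw [inv_div] at this
    calc p i - q i = p i * (1 - q i / p i) := by field_simp
      _ ≤ p i * Real.log (p i / q i) := mul_le_mul_of_nonneg_left this h0.le
  calc (0 : ℝ) ≤ ∑ i, (p i - q i) := by rw [Finset.sum_sub_distrib]; linarith
    _ ≤ _ := Finset.sum_le_sum fun i _ => pointwise i

namespace FinProb

variable {Ω : Type} [Fintype Ω] (μ : FinProb Ω)

section Prob

variable {α β γ : Type} [DecidableEq α] [DecidableEq β] [DecidableEq γ]

theorem prob_nonneg (T : Ω → α) (a : α) : 0 ≤ μ.prob T a :=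
  Finset.sum_nonneg fun ω _ => by split <;> simp [μ.nonneg]

theorem p_le_prob_apply (T : Ω → α) (ω : Ω) : μ.p ω ≤ μ.prob T (T ω) := by
  simpa [prob] using Finset.single_le_sum (f := fun ω' => if T ω' = T ω then μ.p ω' else 0)
    (fun ω' _ => by split <;> simp [μ.nonneg]) (Finset.mem_univ ω)

theorem prob_le_prob_comp (T : Ω → α) (f : α → β) (a : α) :
    μ.prob T a ≤ μ.prob (fun ω => f (T ω)) (f a) :=
  Finset.sum_le_sum fun ω _ => by
    by_cases hT : T ω = a
    · simp [hT]
    · simp only [hT, if_false]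
      split <;> simp [μ.nonneg]

theorem sum_prob_mul [Fintype α] (T : Ω → α) (f : α → ℝ) :
    ∑ a, μ.prob T a * f a = ∑ ω, μ.p ω * f (T ω) := by
  simp only [prob, Finset.sum_mul, ite_mul, zero_mul]
  rw [Finset.sum_comm]
  simp

theorem sum_prob [Fintype α] (T : Ω → α) : ∑ a, μ.prob T a = 1 := by
  simpa [μ.sum_one] using μ.sum_prob_mul T fun _ => 1

theorem sum_prob_prod_left [Fintype α] (X : Ω → α) (Z : Ω → γ) (c : γ) :
    ∑ a, μ.prob (fun ω => (X ω, Z ω)) (a, c) = μ.prob Z c := by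
  simp only [prob, Prod.ext_iff]
  rw [Finset.sum_comm]
  refine Finset.sum_congr rfl fun ω _ => ?_
  by_cases hz : Z ω = c <;> simp [hz]

end Prob

variable {α β γ δ : Type} [Fintype α] [DecidableEq α] [Fintype β] [DecidableEq β]
  [Fintype γ] [DecidableEq γ] [Fintype δ] [DecidableEq δ]

theorem H_eq_neg_sum (T : Ω → α) : μ.H T = -∑ ω, μ.p ω * Real.logb 2 (μ.prob T (T ω)) := by
  rw [H, μ.sum_prob_mul T]

theorem H_congr {S : Ω → β} {T : Ω → α} (h : ∀ ω ω', S ω = S ω' ↔ T ω = T ω') :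
    μ.H S = μ.H T := by
  simp only [H_eq_neg_sum, prob, h]

theorem condI_eq_H (X : Ω → α) (Y : Ω → β) (Z : Ω → γ) :
    μ.condI X Y Z = μ.H (fun ω => (X ω, Z ω)) + μ.H (fun ω => (Y ω, Z ω))
      - μ.H (fun ω => (X ω, Y ω, Z ω)) - μ.H Z := by
  have hassoc : μ.H (fun ω => ((X ω, Y ω), Z ω)) = μ.H (fun ω => (X ω, Y ω, Z ω)) :=
    μ.H_congr (by simp [and_assoc])
  simp only [condI, condH, hassoc]
  ring

theorem condI_eq_sum (X : Ω → α) (Y : Ω → β) (Z : Ω → γ) :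
    μ.condI X Y Z = ∑ t : α × β × γ, μ.prob (fun ω => (X ω, Y ω, Z ω)) t *
      Real.logb 2 (μ.prob (fun ω => (X ω, Y ω, Z ω)) t * μ.prob Z t.2.2 /
        (μ.prob (fun ω => (X ω, Z ω)) (t.1, t.2.2) *
          μ.prob (fun ω => (Y ω, Z ω)) (t.2.1, t.2.2))) := by
  rw [μ.sum_prob_mul, condI_eq_H]
  have split_log : ∀ ω, μ.p ω * Real.logb 2 (μ.prob (fun ω => (X ω, Y ω, Z ω)) (X ω, Y ω, Z ω) *
        μ.prob Z (Z ω) / (μ.prob (fun ω => (X ω, Z ω)) (X ω, Z ω) *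
          μ.prob (fun ω => (Y ω, Z ω)) (Y ω, Z ω)))
      = μ.p ω * Real.logb 2 (μ.prob (fun ω => (X ω, Y ω, Z ω)) (X ω, Y ω, Z ω))
        + μ.p ω * Real.logb 2 (μ.prob Z (Z ω))
        - μ.p ω * Real.logb 2 (μ.prob (fun ω => (X ω, Z ω)) (X ω, Z ω))
        - μ.p ω * Real.logb 2 (μ.prob (fun ω => (Y ω, Z ω)) (Y ω, Z ω)) := by
    intro ω
    rcases (μ.nonneg ω).eq_or_lt with h0 | h0
    · simp [← h0]
    have pos : ∀ {ε : Type} [DecidableEq ε] (T : Ω → ε), μ.prob T (T ω) ≠ 0 :=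
      fun T => (h0.trans_le (μ.p_le_prob_apply T ω)).ne'
    rw [Real.logb_div (mul_ne_zero (pos _) (pos _)) (mul_ne_zero (pos _) (pos _)),
      Real.logb_mul (pos _) (pos _), Real.logb_mul (pos _) (pos _)]
    ring
  simp only [split_log, H_eq_neg_sum, Finset.sum_add_distrib, Finset.sum_sub_distrib]
  ring

theorem sum_prob_mul_prob_div_prob (X : Ω → α) (Y : Ω → β) (Z : Ω → γ) :
    ∑ t : α × β × γ, μ.prob (fun ω => (X ω, Z ω)) (t.1, t.2.2) *
      μ.prob (fun ω => (Y ω, Z ω)) (t.2.1, t.2.2) / μ.prob Z t.2.2 = 1 := by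
  calc _ = ∑ c, (∑ a, μ.prob (fun ω => (X ω, Z ω)) (a, c)) *
        (∑ b, μ.prob (fun ω => (Y ω, Z ω)) (b, c)) / μ.prob Z c := by
        simp only [Fintype.sum_prod_type_right, Finset.sum_mul_sum, Finset.sum_div]
        exact Finset.sum_congr rfl fun c _ => Finset.sum_comm
    _ = ∑ c, μ.prob Z c := by simp only [sum_prob_prod_left, mul_self_div_self]
    _ = 1 := μ.sum_prob Z

theorem condI_nonneg (X : Ω → α) (Y : Ω → β) (Z : Ω → γ) : 0 ≤ μ.condI X Y Z := by
  set P := μ.prob (fun ω => (X ω, Y ω, Z ω))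
  set Q : α × β × γ → ℝ := fun t => μ.prob (fun ω => (X ω, Z ω)) (t.1, t.2.2) *
    μ.prob (fun ω => (Y ω, Z ω)) (t.2.1, t.2.2) / μ.prob Z t.2.2
  have P_le : ∀ {ε : Type} [DecidableEq ε] (f : α × β × γ → ε) (t : α × β × γ),
      P t ≤ μ.prob (fun ω => f (X ω, Y ω, Z ω)) (f t) :=
    fun f t => μ.prob_le_prob_comp _ f t
  have Q_eq_zero : ∀ t, Q t = 0 → P t = 0 := by
    intro t ht
    refine le_antisymm ?_ (μ.prob_nonneg _ t)
    rcases div_eq_zero_iff.mp ht with h | h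
    · rcases mul_eq_zero.mp h with h | h
      · exact h ▸ P_le (fun t => (t.1, t.2.2)) t
      · exact h ▸ P_le (fun t => (t.2.1, t.2.2)) t
    · exact h ▸ P_le (fun t => t.2.2) t
  have gibbs : 0 ≤ ∑ t, P t * Real.log (P t / Q t) :=
    Real.sum_mul_log_div_nonneg (μ.prob_nonneg _)
      (fun _ => div_nonneg (mul_nonneg (μ.prob_nonneg _ _) (μ.prob_nonneg _ _)) (μ.prob_nonneg _ _))
      Q_eq_zero (by rw [μ.sum_prob_mul_prob_div_prob, μ.sum_prob])
  rw [condI_eq_sum]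
  refine (div_nonneg gibbs (Real.log_nonneg one_le_two)).trans_eq ?_
  rw [Finset.sum_div]
  refine Finset.sum_congr rfl fun t _ => ?_
  rw [Real.logb, div_div_eq_mul_div, mul_div_assoc]

theorem condI_eq_zero_of_condIndep {X : Ω → α} {Y : Ω → β} {Z : Ω → γ}
    (h : μ.CondIndep X Y Z) : μ.condI X Y Z = 0 := by
  rw [condI_eq_sum]
  refine Finset.sum_eq_zero fun ⟨a, b, c⟩ _ => ?_
  rw [h a b c]
  -- if the denominator vanishes, the ratio is `0 / 0 = 0` and `logb 2 0 = 0`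
  rcases eq_or_ne (μ.prob (fun ω => (X ω, Z ω)) (a, c) * μ.prob (fun ω => (Y ω, Z ω)) (b, c)) 0
    with hd | hd <;> simp [hd]

theorem condI_comm (X : Ω → α) (Y : Ω → β) (Z : Ω → γ) : μ.condI X Y Z = μ.condI Y X Z := by
  have hswap : μ.H (fun ω => (X ω, Y ω, Z ω)) = μ.H (fun ω => (Y ω, X ω, Z ω)) :=
    μ.H_congr (by simp [and_left_comm])
  rw [condI_eq_H, condI_eq_H, hswap]
  ring

theorem condI_congr {α' β' γ' : Type} [Fintype α'] [DecidableEq α'] [Fintype β'] [DecidableEq β']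
    [Fintype γ'] [DecidableEq γ'] {X : Ω → α} {Y : Ω → β} {Z : Ω → γ}
    {X' : Ω → α'} {Y' : Ω → β'} {Z' : Ω → γ'} (hX : ∀ ω ω', X ω = X ω' ↔ X' ω = X' ω')
    (hY : ∀ ω ω', Y ω = Y ω' ↔ Y' ω = Y' ω') (hZ : ∀ ω ω', Z ω = Z ω' ↔ Z' ω = Z' ω') :
    μ.condI X Y Z = μ.condI X' Y' Z' := by
  have hXZ : μ.H (fun ω => (X ω, Z ω)) = μ.H (fun ω => (X' ω, Z' ω)) :=
    μ.H_congr (by simp [hX, hZ])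
  have hYZ : μ.H (fun ω => (Y ω, Z ω)) = μ.H (fun ω => (Y' ω, Z' ω)) :=
    μ.H_congr (by simp [hY, hZ])
  have hXYZ : μ.H (fun ω => (X ω, Y ω, Z ω)) = μ.H (fun ω => (X' ω, Y' ω, Z' ω)) :=
    μ.H_congr (by simp [hX, hY, hZ])
  rw [condI_eq_H, condI_eq_H, hXZ, hYZ, hXYZ, μ.H_congr hZ]

theorem condI_prod_right_eq_add (A : Ω → α) (B : Ω → β) (C : Ω → γ) (D : Ω → δ) :
    μ.condI A (fun ω => (B ω, C ω)) D = μ.condI A C D + μ.condI A B (fun ω => (C ω, D ω)) := by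
  have h₁ : μ.H (fun ω => ((B ω, C ω), D ω)) = μ.H (fun ω => (B ω, C ω, D ω)) :=
    μ.H_congr (by simp [and_assoc])
  have h₂ : μ.H (fun ω => (A ω, (B ω, C ω), D ω)) = μ.H (fun ω => (A ω, B ω, C ω, D ω)) :=
    μ.H_congr (by simp [and_assoc])
  simp only [condI_eq_H, h₁, h₂]
  ring

theorem condI_eq_zero_of_condIndep_prod {W : Ω → δ} {X : Ω → α} {Y : Ω → β} {Z : Ω → γ}
    (h : μ.CondIndep W (fun ω => (Y ω, Z ω)) X) : μ.condI W Y (fun ω => (Z ω, X ω)) = 0 := by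
  have chain := μ.condI_prod_right_eq_add W Y Z X
  rw [μ.condI_eq_zero_of_condIndep h] at chain
  linarith [μ.condI_nonneg W Z X, μ.condI_nonneg W Y fun ω => (Z ω, X ω)]

theorem condI_le_condI_of_condIndep {W : Ω → δ} {X : Ω → α} {Y : Ω → β} {Z : Ω → γ}
    (h : μ.CondIndep W (fun ω => (Y ω, Z ω)) X) : μ.condI W Y Z ≤ μ.condI X Y Z := by
  have chain_XW := μ.condI_prod_right_eq_add Y X W Z
  have chain_WX := μ.condI_prod_right_eq_add Y W X Z
  have swap_XW : μ.condI Y (fun ω => (X ω, W ω)) Z = μ.condI Y (fun ω => (W ω, X ω)) Z :=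
    μ.condI_congr (fun _ _ => Iff.rfl) (by simp [and_comm]) (fun _ _ => Iff.rfl)
  have vanish : μ.condI Y W (fun ω => (X ω, Z ω)) = 0 := by
    rw [condI_comm, ← μ.condI_eq_zero_of_condIndep_prod h]
    exact μ.condI_congr (fun _ _ => Iff.rfl) (fun _ _ => Iff.rfl) (by simp [and_comm])
  rw [condI_comm μ W, condI_comm μ X]
  linarith [μ.condI_nonneg Y X fun ω => (W ω, Z ω)]

theorem condI_sub_condI_le (A : Ω → α) (B : Ω → β) (C : Ω → γ) (D : Ω → δ) :
    μ.condI A B D - μ.condI A C D ≤ μ.condI A B (fun ω => (C ω, D ω)) := by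
  have chain_BC := μ.condI_prod_right_eq_add A B C D
  have chain_CB := μ.condI_prod_right_eq_add A C B D
  have swap_BC : μ.condI A (fun ω => (B ω, C ω)) D = μ.condI A (fun ω => (C ω, B ω)) D :=
    μ.condI_congr (fun _ _ => Iff.rfl) (by simp [and_comm]) (fun _ _ => Iff.rfl)
  linarith [μ.condI_nonneg A C fun ω => (B ω, D ω)]

theorem condI_le_condI_prod_left (A : Ω → α) (B : Ω → β) (C : Ω → γ) (D : Ω → δ) :
    μ.condI A B (fun ω => (C ω, D ω)) ≤ μ.condI (fun ω => (D ω, A ω)) B C := by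
  have chain := μ.condI_prod_right_eq_add B A D C
  have swap_AD : μ.condI B (fun ω => (A ω, D ω)) C = μ.condI (fun ω => (D ω, A ω)) B C := by
    rw [condI_comm]
    exact μ.condI_congr (by simp [and_comm]) (fun _ _ => Iff.rfl) (fun _ _ => Iff.rfl)
  have swap_CD : μ.condI B A (fun ω => (D ω, C ω)) = μ.condI A B (fun ω => (C ω, D ω)) := by
    rw [condI_comm]
    exact μ.condI_congr (fun _ _ => Iff.rfl) (fun _ _ => Iff.rfl) (by simp [and_comm])
  linarith [μ.condI_nonneg B D C]

end FinProb

theorem stmt3_general {Ω W2 W1 X Y Z : Type} [Fintype Ω]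
    [Fintype W2] [DecidableEq W2] [Fintype W1] [DecidableEq W1]
    [Fintype X] [DecidableEq X] [Fintype Y] [DecidableEq Y] [Fintype Z] [DecidableEq Z]
    (μ : FinProb Ω) (w2 : Ω → W2) (w1 : Ω → W1) (x : Ω → X) (y : Ω → Y) (z : Ω → Z)
    (h2 : μ.CondIndep (fun ω => (w2 ω, w1 ω)) (fun ω => (y ω, z ω)) x) :
    μ.condI w1 y w2 - μ.condI w1 z w2 ≤ μ.condI w1 y (fun ω => (z ω, w2 ω)) ∧
      μ.condI w1 y (fun ω => (z ω, w2 ω)) ≤ μ.condI x y z :=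
  ⟨μ.condI_sub_condI_le w1 y z w2,
    (μ.condI_le_condI_prod_left w1 y z w2).trans (μ.condI_le_condI_of_condIndep h2)⟩

theorem stmt3 {Ω W2 W1 X Y Z : Type} [Fintype Ω]
    [Fintype W2] [DecidableEq W2] [Fintype W1] [DecidableEq W1]
    [Fintype X] [DecidableEq X] [Fintype Y] [DecidableEq Y] [Fintype Z] [DecidableEq Z]
    (μ : FinProb Ω) (w2 : Ω → W2) (w1 : Ω → W1) (x : Ω → X) (y : Ω → Y) (z : Ω → Z)
    (h1 : μ.CondIndep w2 (fun ω => (x ω, y ω, z ω)) w1)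
    (h2 : μ.CondIndep (fun ω => (w2 ω, w1 ω)) (fun ω => (y ω, z ω)) x)
    (h3 : μ.CondIndep (fun ω => (w2 ω, w1 ω, x ω)) z y) :
    μ.condI w1 y w2 - μ.condI w1 z w2 ≤ μ.condI w1 y (fun ω => (z ω, w2 ω)) ∧
      μ.condI w1 y (fun ω => (z ω, w2 ω)) ≤ μ.condI x y z :=
  stmt3_general μ w2 w1 x y z h2
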